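/- arXiv:2105.00115 — 3 statements merged into one kernel-verified Lean document; each statement's English description precedes it below -/
import Mathlib

section
/- (Theorem 3.1, absolute error bound for qdot.) Let x, y ∈ ℝⁿ with x_i y_i ≠ 0 for every i, set z = x⊙y, and suppose the integer intervals {(ℓ_k, u_k]}_{k=1}^p partition [e_min(z), e_max(z)]. Let z̃ be any quantized dot product of x and y with respect to the bins B_k = B_{ℓ_k,u_k}(z) and accuracies ε(1),…,ε(p) > 0. Then |xᵀy − z̃| ≤ Σ_{k=1}^p M_k · 2^{u_k+1} · ε(k), where M_k is the cardinality of B_{ℓ_k,u_k}(z). -/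
/-- `flexp x = ⌊log₂ |x|⌋` if `|x| ≥ 1` and `⌈log₂ |x|⌉` if `|x| < 1`. -/
noncomputable def flexp (x : ℝ) : ℤ :=
  if 1 ≤ |x| then ⌊Real.logb 2 |x|⌋ else ⌈Real.logb 2 |x|⌉

/-- `emax z = max_i flexp (z i)`. -/
noncomputable def emax {n : ℕ} [NeZero n] (z : Fin n → ℝ) : ℤ :=
  Finset.univ.sup' Finset.univ_nonempty (fun i => flexp (z i))

/-- `emin z = min_i flexp (z i)`. -/
noncomputable def emin {n : ℕ} [NeZero n] (z : Fin n → ℝ) : ℤ :=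
  Finset.univ.inf' Finset.univ_nonempty (fun i => flexp (z i))

/-- The `(l,u)`-exponent bin of `z`: indices `i` with `l < flexp (z i) ≤ u`. -/
noncomputable def bin {n : ℕ} (z : Fin n → ℝ) (l u : ℤ) : Finset (Fin n) :=
  Finset.univ.filter (fun i => l < flexp (z i) ∧ flexp (z i) ≤ u)

/-- `zt` is a quantized dot product of `x` and `y` w.r.t. bins `B` and accuracies `ε`. -/
def IsQuantDot {n p : ℕ} (x y : Fin n → ℝ) (B : Fin p → Finset (Fin n))
    (ε : Fin p → ℝ) (zt : ℝ) : Prop :=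
  ∃ δ : Fin n → ℝ, (∀ k : Fin p, ∀ j ∈ B k, |δ j| ≤ ε k) ∧
    zt = ∑ k : Fin p, ∑ j ∈ B k, x j * y j * (1 + δ j)

lemma abs_le_two_zpow_flexp {z : ℝ} (hz : z ≠ 0) : |z| ≤ (2 : ℝ) ^ (flexp z + 1) := by
  have hzpos : (0 : ℝ) < |z| := abs_pos.mpr hz
  have key : Real.logb 2 |z| ≤ ((flexp z + 1 : ℤ) : ℝ) := by
    unfold flexp
    split_ifs with h
    · push_cast
      exact le_of_lt (by linarith [Int.lt_floor_add_one (Real.logb 2 |z|)])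
    · push_cast
      linarith [Int.le_ceil (Real.logb 2 |z|)]
  have h1 : |z| = (2 : ℝ) ^ (Real.logb 2 |z|) :=
    (Real.rpow_logb (by norm_num) (by norm_num) hzpos).symm
  calc |z| = (2 : ℝ) ^ (Real.logb 2 |z|) := h1
    _ ≤ (2 : ℝ) ^ ((flexp z + 1 : ℤ) : ℝ) :=
        Real.rpow_le_rpow_of_exponent_le (by norm_num) key
    _ = (2 : ℝ) ^ (flexp z + 1) := Real.rpow_intCast 2 _

theorem stmt3 {n p : ℕ} [NeZero n] (x y : Fin n → ℝ)
    (hxy : ∀ i, x i * y i ≠ 0)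
    (l u : Fin p → ℤ)
    (hpart : ∀ e : ℤ, emin (fun i => x i * y i) ≤ e → e ≤ emax (fun i => x i * y i) →
      ∃! k : Fin p, l k < e ∧ e ≤ u k)
    (ε : Fin p → ℝ) (hε : ∀ k, 0 < ε k) (zt : ℝ)
    (hzt : IsQuantDot x y (fun k => bin (fun i => x i * y i) (l k) (u k)) ε zt) :
    |(∑ i : Fin n, x i * y i) - zt| ≤
      ∑ k : Fin p,
        ((bin (fun i => x i * y i) (l k) (u k)).card : ℝ) * (2 : ℝ) ^ (u k + 1) * ε k := by
  set z : Fin n → ℝ := fun i => x i * y i with hz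
  obtain ⟨δ, hδ, rfl⟩ := hzt
  have hmem : ∀ i, emin z ≤ flexp (z i) ∧ flexp (z i) ≤ emax z := by
    intro i
    unfold emin emax
    exact ⟨Finset.inf'_le _ (Finset.mem_univ i), Finset.le_sup' (fun j => flexp (z j)) (Finset.mem_univ i)⟩
  choose f hf hfu using fun i => hpart (flexp (z i)) (hmem i).1 (hmem i).2
  have hBk : ∀ k, bin z (l k) (u k) = Finset.univ.filter (fun i => f i = k) := by
    intro k
    ext i
    simp only [bin, Finset.mem_filter, Finset.mem_univ, true_and]
    constructor
    · intro h; exact (hfu i k h).symm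
    · intro h; subst h; exact hf i
  have hsum : ∀ g : Fin n → ℝ,
      (∑ k : Fin p, ∑ j ∈ bin z (l k) (u k), g j) = ∑ i : Fin n, g i := by
    intro g
    simp_rw [hBk]
    exact Finset.sum_fiberwise _ _ _
  have hrw : (∑ i : Fin n, z i) - (∑ k : Fin p, ∑ j ∈ bin z (l k) (u k), z j * (1 + δ j)) =
      ∑ k : Fin p, ∑ j ∈ bin z (l k) (u k), (-(z j * δ j)) := by
    rw [← hsum z]
    rw [← Finset.sum_sub_distrib]
    refine Finset.sum_congr rfl fun k _ => ?_
    rw [← Finset.sum_sub_distrib]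
    refine Finset.sum_congr rfl fun j _ => ?_
    ring
  rw [hrw]
  refine le_trans (Finset.abs_sum_le_sum_abs _ _) ?_
  refine Finset.sum_le_sum fun k _ => ?_
  refine le_trans (Finset.abs_sum_le_sum_abs _ _) ?_
  have hbound : ∀ j ∈ bin z (l k) (u k), |(-(z j * δ j))| ≤ (2 : ℝ) ^ (u k + 1) * ε k := by
    intro j hj
    simp only [bin, Finset.mem_filter] at hj
    rw [abs_neg, abs_mul]
    have h1 : |z j| ≤ (2 : ℝ) ^ (u k + 1) := by
      refine le_trans (abs_le_two_zpow_flexp (hxy j)) ?_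
      exact zpow_le_zpow_right₀ (by norm_num) (by linarith [hj.2.2])
    have h2 : |δ j| ≤ ε k := hδ k j (by simp only [bin, Finset.mem_filter]; exact hj)
    exact mul_le_mul h1 h2 (abs_nonneg _) (by positivity)
  refine le_trans (Finset.sum_le_sum hbound) ?_
  rw [Finset.sum_const, nsmul_eq_mul, mul_assoc]
end

section
/- (Theorem 3.4, relative error of qdot with the Precision selection rule.) Let x, y ∈ ℝⁿ with x_i y_i ≠ 0 for every i, set z = x⊙y, and suppose the integer intervals {(ℓ_k, u_k]}_{k=1}^p partition [e_min(z), e_max(z)]. Assume e_max(z) ≤ flexp(xᵀy) and 2^{flexp(xᵀy)} ≤ |xᵀy|. Let ε > 0 be a tolerance, and for each k with B_{ℓ_k,u_k}(z) nonempty suppose the accuracy is ε(k) = 2^{−μ_k} for a natural number μ_k satisfying μ_k ≥ ⌈log₂ M_k⌉ + u_k − e_max(z) − ⌊log₂ ε⌋ + 1, where M_k is the cardinality of B_{ℓ_k,u_k}(z). If z̃ is any quantized dot product of x and y with respect to these bins and accuracies, then |xᵀy − z̃| ≤ p · ε · |xᵀy|; that is, the relative approximation error is at most τ|xᵀy| with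 τ = pε = O(ε). -/
lemma abs_le_two_zpow {x : ℝ} (hx : x ≠ 0) : |x| ≤ (2:ℝ) ^ (flexp x + 1) := by
  have hx0 : (0:ℝ) < |x| := abs_pos.mpr hx
  have key : Real.logb 2 |x| ≤ ((flexp x + 1 : ℤ) : ℝ) := by
    unfold flexp
    split_ifs with h
    · push_cast
      linarith [Int.lt_floor_add_one (Real.logb 2 |x|)]
    · push_cast
      linarith [Int.le_ceil (Real.logb 2 |x|)]
  calc |x| = (2:ℝ) ^ Real.logb 2 |x| := (Real.rpow_logb (by norm_num) (by norm_num) hx0).symm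
    _ ≤ (2:ℝ) ^ ((flexp x + 1 : ℤ) : ℝ) := Real.rpow_le_rpow_of_exponent_le one_le_two key
    _ = (2:ℝ) ^ (flexp x + 1) := Real.rpow_intCast 2 _

lemma le_two_zpow_ceil {m : ℝ} (hm : 0 < m) : m ≤ (2:ℝ) ^ ⌈Real.logb 2 m⌉ := by
  calc m = (2:ℝ) ^ Real.logb 2 m := (Real.rpow_logb (by norm_num) (by norm_num) hm).symm
    _ ≤ (2:ℝ) ^ ((⌈Real.logb 2 m⌉ : ℤ) : ℝ) :=
        Real.rpow_le_rpow_of_exponent_le one_le_two (Int.le_ceil _)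
    _ = (2:ℝ) ^ (⌈Real.logb 2 m⌉ : ℤ) := Real.rpow_intCast 2 _

lemma two_zpow_floor_le {e : ℝ} (he : 0 < e) : (2:ℝ) ^ ⌊Real.logb 2 e⌋ ≤ e := by
  calc (2:ℝ) ^ (⌊Real.logb 2 e⌋ : ℤ) = (2:ℝ) ^ ((⌊Real.logb 2 e⌋ : ℤ) : ℝ) :=
        (Real.rpow_intCast 2 _).symm
    _ ≤ (2:ℝ) ^ Real.logb 2 e :=
        Real.rpow_le_rpow_of_exponent_le one_le_two (Int.floor_le _)
    _ = e := Real.rpow_logb (by norm_num) (by norm_num) he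

theorem stmt8 {n p : ℕ} [NeZero n] (x y : Fin n → ℝ)
    (hxy : ∀ i, x i * y i ≠ 0)
    (l u : Fin p → ℤ)
    (hpart : ∀ e : ℤ, emin (fun i => x i * y i) ≤ e → e ≤ emax (fun i => x i * y i) →
      ∃! k : Fin p, l k < e ∧ e ≤ u k)
    (hE : emax (fun i => x i * y i) ≤ flexp (∑ i : Fin n, x i * y i))
    (h2E : (2 : ℝ) ^ (flexp (∑ i : Fin n, x i * y i)) ≤ |∑ i : Fin n, x i * y i|)
    (ε : ℝ) (hε : 0 < ε)
    (εf : Fin p → ℝ) (hεf : ∀ k, 0 < εf k) (μ : Fin p → ℕ)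
    (hacc : ∀ k : Fin p, (bin (fun i => x i * y i) (l k) (u k)).Nonempty →
      εf k = (2 : ℝ) ^ (-(μ k : ℤ)) ∧
      (μ k : ℤ) ≥ ⌈Real.logb 2 ((bin (fun i => x i * y i) (l k) (u k)).card : ℝ)⌉ +
        u k - emax (fun i => x i * y i) - ⌊Real.logb 2 ε⌋ + 1)
    (zt : ℝ)
    (hzt : IsQuantDot x y (fun k => bin (fun i => x i * y i) (l k) (u k)) εf zt) :
    |(∑ i : Fin n, x i * y i) - zt| ≤ (p : ℝ) * ε * |∑ i : Fin n, x i * y i| := by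
  set z : Fin n → ℝ := fun i => x i * y i with hzdef
  set s : ℝ := ∑ i : Fin n, x i * y i with hsdef
  set E : ℤ := emax z with hEdef
  obtain ⟨δ, hδ, hztEq⟩ := hzt
  -- every index is in exactly one bin
  have hmem : ∀ i : Fin n, ∃! k : Fin p, l k < flexp (z i) ∧ flexp (z i) ≤ u k := fun i =>
    hpart _ (Finset.inf'_le (fun j => flexp (z j)) (Finset.mem_univ i))
      (Finset.le_sup' (fun j => flexp (z j)) (Finset.mem_univ i))
  choose κ hκ hκu using hmem
  have hbin : ∀ k, bin z (l k) (u k) = Finset.univ.filter (fun i => κ i = k) := by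
    intro k
    ext i
    simp only [bin, Finset.mem_filter, Finset.mem_univ, true_and]
    constructor
    · intro h
      exact (hκu i k h).symm
    · rintro rfl
      exact hκ i
  -- 2^E ≤ |s|
  have hs2E : (2:ℝ) ^ E ≤ |s| :=
    le_trans (zpow_le_zpow_right₀ one_le_two hE) h2E
  have hs0 : (0:ℝ) < |s| := lt_of_lt_of_le (zpow_pos (by norm_num) E) hs2E
  -- rewrite s as a sum over bins
  have hsum : ∀ f : Fin n → ℝ,
      (∑ k : Fin p, ∑ j ∈ bin z (l k) (u k), f j) = ∑ i : Fin n, f i := by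
    intro f
    rw [show (fun k : Fin p => ∑ j ∈ bin z (l k) (u k), f j) =
        fun k => ∑ j ∈ Finset.univ.filter (fun i => κ i = k), f j from
      funext fun k => by rw [hbin]]
    exact Finset.sum_fiberwise_of_maps_to (fun i _ => Finset.mem_univ (κ i)) f
  have hdiff : s - zt = ∑ k : Fin p, ∑ j ∈ bin z (l k) (u k), -(z j * δ j) := by
    rw [hztEq, hsdef]
    rw [← hsum (fun i => x i * y i)]
    rw [← Finset.sum_sub_distrib]
    refine Finset.sum_congr rfl fun k _ => ?_
    rw [← Finset.sum_sub_distrib]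
    refine Finset.sum_congr rfl fun j _ => ?_
    simp only [hzdef]
    ring
  -- per-bin bound
  have hbinbound : ∀ k : Fin p, ∑ j ∈ bin z (l k) (u k), |z j * δ j| ≤ ε * |s| := by
    intro k
    rcases (bin z (l k) (u k)).eq_empty_or_nonempty with he | hne
    · rw [he]
      simp
      positivity
    · obtain ⟨hεfk, hμk⟩ := hacc k hne
      set B := bin z (l k) (u k) with hB
      set M : ℕ := B.card with hM
      have hM1 : (1:ℝ) ≤ (M:ℝ) := by
        have := Finset.card_pos.mpr hne
        exact_mod_cast this
      set c : ℤ := ⌈Real.logb 2 (M : ℝ)⌉ with hc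
      set f : ℤ := ⌊Real.logb 2 ε⌋ with hf
      -- per-element bound
      have helem : ∀ j ∈ B, |z j * δ j| ≤ (2:ℝ) ^ (u k + 1) * (2:ℝ) ^ (-(μ k : ℤ)) := by
        intro j hj
        have hj' : l k < flexp (z j) ∧ flexp (z j) ≤ u k := by
          simpa [hB, bin] using hj
        have h1 : |z j| ≤ (2:ℝ) ^ (u k + 1) := by
          refine le_trans (abs_le_two_zpow (hxy j)) ?_
          exact zpow_le_zpow_right₀ one_le_two (by linarith [hj'.2])
        have h2 : |δ j| ≤ (2:ℝ) ^ (-(μ k : ℤ)) := hεfk ▸ hδ k j hj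
        rw [abs_mul]
        exact mul_le_mul h1 h2 (abs_nonneg _) (by positivity)
      have hsum1 : ∑ j ∈ B, |z j * δ j| ≤ (M:ℝ) * ((2:ℝ) ^ (u k + 1) * (2:ℝ) ^ (-(μ k : ℤ))) := by
        calc ∑ j ∈ B, |z j * δ j| ≤ ∑ _j ∈ B, (2:ℝ) ^ (u k + 1) * (2:ℝ) ^ (-(μ k : ℤ)) :=
              Finset.sum_le_sum helem
          _ = (M:ℝ) * ((2:ℝ) ^ (u k + 1) * (2:ℝ) ^ (-(μ k : ℤ))) := by
              rw [Finset.sum_const, nsmul_eq_mul]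
      refine le_trans hsum1 ?_
      -- 2^{-μ} ≤ 2^{-(c + u - E - f + 1)}
      have hmono : (2:ℝ) ^ (-(μ k : ℤ)) ≤ (2:ℝ) ^ (-(c + u k - E - f + 1)) :=
        zpow_le_zpow_right₀ one_le_two (by linarith [hμk])
      have step1 : (M:ℝ) * ((2:ℝ) ^ (u k + 1) * (2:ℝ) ^ (-(μ k : ℤ))) ≤
          (M:ℝ) * ((2:ℝ) ^ (u k + 1) * (2:ℝ) ^ (-(c + u k - E - f + 1))) := by
        have h2pos : (0:ℝ) ≤ (2:ℝ) ^ (u k + 1) := le_of_lt (zpow_pos (by norm_num) _)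
        exact mul_le_mul_of_nonneg_left (mul_le_mul_of_nonneg_left hmono h2pos)
          (by positivity)
      refine le_trans step1 ?_
      have heq : (2:ℝ) ^ (u k + 1) * (2:ℝ) ^ (-(c + u k - E - f + 1)) =
          (2:ℝ) ^ (-c) * ((2:ℝ) ^ E * (2:ℝ) ^ f) := by
        rw [← zpow_add₀ (by norm_num : (2:ℝ) ≠ 0), ← zpow_add₀ (by norm_num : (2:ℝ) ≠ 0),
          ← zpow_add₀ (by norm_num : (2:ℝ) ≠ 0)]
        ring_nf
      rw [heq]
      have hMc : (M:ℝ) * (2:ℝ) ^ (-c) ≤ 1 := by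
        have hMle : (M:ℝ) ≤ (2:ℝ) ^ c := le_two_zpow_ceil (by linarith)
        have : (0:ℝ) < (2:ℝ) ^ c := zpow_pos (by norm_num) _
        rw [zpow_neg, ← div_eq_mul_inv, div_le_one this]
        exact hMle
      have hfε : (2:ℝ) ^ f ≤ ε := two_zpow_floor_le hε
      calc (M:ℝ) * ((2:ℝ) ^ (-c) * ((2:ℝ) ^ E * (2:ℝ) ^ f)) =
            ((M:ℝ) * (2:ℝ) ^ (-c)) * ((2:ℝ) ^ E * (2:ℝ) ^ f) := by ring
        _ ≤ 1 * ((2:ℝ) ^ E * (2:ℝ) ^ f) := by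
            have : (0:ℝ) ≤ (2:ℝ) ^ E * (2:ℝ) ^ f := by positivity
            exact mul_le_mul_of_nonneg_right hMc this
        _ = (2:ℝ) ^ E * (2:ℝ) ^ f := one_mul _
        _ ≤ |s| * ε := by
            exact mul_le_mul hs2E hfε (by positivity) (le_of_lt hs0)
        _ = ε * |s| := mul_comm _ _
  -- combine
  calc |s - zt| = |∑ k : Fin p, ∑ j ∈ bin z (l k) (u k), -(z j * δ j)| := by rw [hdiff]
    _ ≤ ∑ k : Fin p, |∑ j ∈ bin z (l k) (u k), -(z j * δ j)| := Finset.abs_sum_le_sum_abs _ _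
    _ ≤ ∑ k : Fin p, ∑ j ∈ bin z (l k) (u k), |z j * δ j| := by
        refine Finset.sum_le_sum fun k _ => ?_
        refine le_trans (Finset.abs_sum_le_sum_abs _ _) ?_
        simp [abs_neg]
    _ ≤ ∑ _k : Fin p, ε * |s| := Finset.sum_le_sum fun k _ => hbinbound k
    _ = (p : ℝ) * ε * |s| := by rw [Finset.sum_const, nsmul_eq_mul]; simp; ring
end

section
/- (Relative error bound for quantized squared norms.) Let x ∈ ℝⁿ with x_i ≠ 0 for every i and xᵀx ≥ 1, set z = x⊙x, and suppose the integer intervals {(ℓ_k, u_k]}_{k=1}^p partition [e_min(z), e_max(z)]. Let z̃ be any quantized dot product of x with itself with respect to the bins B_k = B_{ℓ_k,u_k}(z) and accuracies ε(1),…,ε(p) > 0. Then |xᵀx − z̃| ≤ xᵀx · Σ_{k=1}^p M_k · 2^{u_k − e_max(z) + 1} · ε(k), where M_k is the cardinality of B_{ℓ_k,u_k}(z); no hypothesis relating e_max(z) to flexp(xᵀx) is needed because all componentwise products x_i² are positive. -/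
lemma flexp_upper {z : ℝ} (hz : 0 < z) : z ≤ (2:ℝ) ^ (flexp z + 1) := by
  have habs : |z| = z := abs_of_pos hz
  have hlog : Real.logb 2 z ≤ ((flexp z + 1 : ℤ) : ℝ) := by
    unfold flexp
    rw [habs]
    split_ifs with h
    · push_cast; linarith [Int.lt_floor_add_one (Real.logb 2 z)]
    · push_cast; linarith [Int.le_ceil (Real.logb 2 z)]
  calc z = (2:ℝ) ^ (Real.logb 2 z) := (Real.rpow_logb (by norm_num) (by norm_num) hz).symm
    _ ≤ (2:ℝ) ^ (((flexp z + 1 : ℤ) : ℝ)) :=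
        Real.rpow_le_rpow_of_exponent_le one_le_two hlog
    _ = (2:ℝ) ^ (flexp z + 1) := Real.rpow_intCast 2 _

lemma flexp_lower {z : ℝ} (hz : 0 < z) : (2:ℝ) ^ (flexp z) ≤ max z 1 := by
  have habs : |z| = z := abs_of_pos hz
  unfold flexp
  rw [habs]
  split_ifs with h
  · refine le_trans ?_ (le_max_left _ _)
    calc (2:ℝ) ^ (⌊Real.logb 2 z⌋) = (2:ℝ) ^ ((⌊Real.logb 2 z⌋ : ℝ)) :=
          (Real.rpow_intCast 2 _).symm
      _ ≤ (2:ℝ) ^ (Real.logb 2 z) :=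
          Real.rpow_le_rpow_of_exponent_le one_le_two (Int.floor_le _)
      _ = z := Real.rpow_logb (by norm_num) (by norm_num) hz
  · refine le_trans ?_ (le_max_right _ _)
    push_neg at h
    have hlog : Real.logb 2 z ≤ 0 :=
      Real.logb_nonpos one_lt_two hz.le h.le
    have hc : ⌈Real.logb 2 z⌉ ≤ 0 := Int.ceil_le.mpr (by exact_mod_cast hlog)
    calc (2:ℝ) ^ (⌈Real.logb 2 z⌉) ≤ (2:ℝ) ^ (0:ℤ) :=
          zpow_le_zpow_right₀ one_le_two hc
      _ = 1 := zpow_zero 2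

theorem stmt12 {n p : ℕ} [NeZero n] (x : Fin n → ℝ)
    (hx : ∀ i, x i ≠ 0)
    (hx1 : 1 ≤ ∑ i : Fin n, x i * x i)
    (l u : Fin p → ℤ)
    (hpart : ∀ e : ℤ, emin (fun i => x i * x i) ≤ e → e ≤ emax (fun i => x i * x i) →
      ∃! k : Fin p, l k < e ∧ e ≤ u k)
    (ε : Fin p → ℝ) (hε : ∀ k, 0 < ε k) (zt : ℝ)
    (hzt : IsQuantDot x x (fun k => bin (fun i => x i * x i) (l k) (u k)) ε zt) :
    |(∑ i : Fin n, x i * x i) - zt| ≤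
      (∑ i : Fin n, x i * x i) *
        ∑ k : Fin p,
          ((bin (fun i => x i * x i) (l k) (u k)).card : ℝ) *
            (2 : ℝ) ^ (u k - emax (fun i => x i * x i) + 1) * ε k := by
  classical
  set z : Fin n → ℝ := fun i => x i * x i with hzdef
  have hzpos : ∀ i, 0 < z i := fun i => mul_self_pos.mpr (hx i)
  set S : ℝ := ∑ i : Fin n, z i with hSdef
  set B : Fin p → Finset (Fin n) := fun k => bin z (l k) (u k) with hBdef
  obtain ⟨δ, hδ, hzteq⟩ := hzt
  have hmem : ∀ i k, i ∈ B k ↔ l k < flexp (z i) ∧ flexp (z i) ≤ u k := by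
    intro i k; simp [hBdef, bin]
  have hcoveru : ∀ i : Fin n, ∃! k, i ∈ B k := by
    intro i
    have h1 : emin z ≤ flexp (z i) := Finset.inf'_le (fun i => flexp (z i)) (Finset.mem_univ i)
    have h2 : flexp (z i) ≤ emax z := Finset.le_sup' (fun i => flexp (z i)) (Finset.mem_univ i)
    obtain ⟨k, hk, huniq⟩ := hpart _ h1 h2
    exact ⟨k, (hmem i k).mpr hk, fun k' hk' => huniq k' ((hmem i k').mp hk')⟩
  have hdisj : ((Finset.univ : Finset (Fin p)) : Set (Fin p)).PairwiseDisjoint B := by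
    intro k _ k' _ hkk'
    refine Finset.disjoint_left.mpr ?_
    intro i hik hik'
    obtain ⟨k₀, _, huniq⟩ := hcoveru i
    exact hkk' ((huniq k hik).trans (huniq k' hik').symm)
  have hunion : Finset.univ.biUnion B = (Finset.univ : Finset (Fin n)) := by
    ext i
    simp only [Finset.mem_biUnion, Finset.mem_univ, true_and, iff_true]
    obtain ⟨k, hk, _⟩ := hcoveru i
    exact ⟨k, hk⟩
  have hsum : ∀ f : Fin n → ℝ, ∑ k : Fin p, ∑ j ∈ B k, f j = ∑ j : Fin n, f j := by
    intro f
    rw [← hunion, Finset.sum_biUnion hdisj]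
  -- key identity
  have key : S - zt = -∑ k : Fin p, ∑ j ∈ B k, z j * δ j := by
    rw [hzteq]
    have : ∀ k : Fin p, ∑ j ∈ B k, x j * x j * (1 + δ j)
        = (∑ j ∈ B k, z j) + ∑ j ∈ B k, z j * δ j := by
      intro k
      rw [← Finset.sum_add_distrib]
      exact Finset.sum_congr rfl (fun j _ => by ring)
    simp only [this, Finset.sum_add_distrib]
    rw [hsum (fun j => z j)]
    ring
  rw [key, abs_neg]
  -- bound the error sum
  have hterm : ∀ k : Fin p, ∀ j ∈ B k,
      |z j * δ j| ≤ (2:ℝ) ^ (u k + 1) * ε k := by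
    intro k j hj
    rw [abs_mul, abs_of_pos (hzpos j)]
    have h1 : z j ≤ (2:ℝ) ^ (flexp (z j) + 1) := flexp_upper (hzpos j)
    have h2 : (2:ℝ) ^ (flexp (z j) + 1) ≤ (2:ℝ) ^ (u k + 1) := by
      apply zpow_le_zpow_right₀ one_le_two
      have := ((hmem j k).mp hj).2
      omega
    have h3 : |δ j| ≤ ε k := hδ k j hj
    have hz1 : 0 ≤ z j := (hzpos j).le
    calc z j * |δ j| ≤ (2:ℝ) ^ (u k + 1) * |δ j| := by
          apply mul_le_mul_of_nonneg_right (h1.trans h2) (abs_nonneg _)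
      _ ≤ (2:ℝ) ^ (u k + 1) * ε k := by
          apply mul_le_mul_of_nonneg_left h3 (by positivity)
  have hbound1 : |∑ k : Fin p, ∑ j ∈ B k, z j * δ j| ≤
      ∑ k : Fin p, ((B k).card : ℝ) * (2:ℝ) ^ (u k + 1) * ε k := by
    refine (Finset.abs_sum_le_sum_abs _ _).trans ?_
    apply Finset.sum_le_sum
    intro k _
    refine (Finset.abs_sum_le_sum_abs _ _).trans ?_
    calc ∑ j ∈ B k, |z j * δ j| ≤ ∑ _j ∈ B k, (2:ℝ) ^ (u k + 1) * ε k :=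
          Finset.sum_le_sum (hterm k)
      _ = ((B k).card : ℝ) * (2:ℝ) ^ (u k + 1) * ε k := by
          rw [Finset.sum_const, nsmul_eq_mul, mul_assoc]
  -- 2^(emax z) ≤ S
  have hemax : (2:ℝ) ^ (emax z) ≤ S := by
    obtain ⟨i₀, _, hi₀⟩ := Finset.exists_mem_eq_sup' (Finset.univ_nonempty)
      (fun i => flexp (z i))
    rw [show emax z = flexp (z i₀) from hi₀]
    have hle : z i₀ ≤ S :=
      Finset.single_le_sum (fun i _ => (hzpos i).le) (Finset.mem_univ i₀)
    have := flexp_lower (hzpos i₀)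
    rcases max_cases (z i₀) 1 with ⟨heq, _⟩ | ⟨heq, _⟩
    · rw [heq] at this; linarith
    · rw [heq] at this; linarith [hx1]
  refine hbound1.trans ?_
  rw [Finset.mul_sum]
  apply Finset.sum_le_sum
  intro k _
  have hs : (2:ℝ) ^ (u k + 1) = (2:ℝ) ^ (u k - emax z + 1) * (2:ℝ) ^ (emax z) := by
    rw [← zpow_add₀ (by norm_num : (2:ℝ) ≠ 0)]
    ring_nf
  rw [hs]
  have hc : (0:ℝ) ≤ ((B k).card : ℝ) := Nat.cast_nonneg _
  have hp : (0:ℝ) ≤ (2:ℝ) ^ (u k - emax z + 1) := by positivity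
  calc ((B k).card : ℝ) * ((2:ℝ) ^ (u k - emax z + 1) * (2:ℝ) ^ (emax z)) * ε k
      ≤ ((B k).card : ℝ) * ((2:ℝ) ^ (u k - emax z + 1) * S) * ε k := by
        apply mul_le_mul_of_nonneg_right _ (hε k).le
        apply mul_le_mul_of_nonneg_left _ hc
        exact mul_le_mul_of_nonneg_left hemax hp
    _ = S * (((B k).card : ℝ) * (2:ℝ) ^ (u k - emax z + 1) * ε k) := by ring
end
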